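/- arXiv:1707.02648 — 2 statements merged into one kernel-verified Lean document; each statement's English description precedes it below -/
import Mathlib

section
/- The minimizer map a* is uniformly Lipschitz: there exists a constant C > 0 such that for all x ∈ [d], η,η′ ∈ P([d]) and p,p′ ∈ ℝ^d, ‖a*(x,η,p) − a*(x,η′,p′)‖ ≤ C(‖η−η′‖ + ‖p−p′‖). -/
noncomputable section

def eucNorm {d : ℕ} (v : Fin d → ℝ) : ℝ := Real.sqrt (∑ x, v x ^ 2)

def probSimplex (d : ℕ) : Set (Fin d → ℝ) := {η | (∀ x, 0 ≤ η x) ∧ ∑ x, η x = 1}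

def deltaOp {d : ℕ} (x : Fin d) (φ : Fin d → ℝ) : Fin d → ℝ := fun l => φ l - φ x

def dotCLM {d : ℕ} (v : Fin d → ℝ) : (Fin d → ℝ) →L[ℝ] ℝ :=
  ∑ y, v y • ContinuousLinearMap.proj y

def ctrlSet (d : ℕ) (κ : ℝ) (x : Fin d) : Set (Fin d → ℝ) :=
  {a | (∀ y, y ≠ x → κ ≤ a y) ∧ a x = -∑ y ∈ Finset.univ.erase x, a y}

def offSum {d : ℕ} (x : Fin d) (a p : Fin d → ℝ) : ℝ := ∑ y ∈ Finset.univ.erase x, a y * p y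

/-- `ℝ^d_x`: admissible rate vectors out of state `x`. -/
def rateSet (d : ℕ) (x : Fin d) : Set (Fin d → ℝ) := ctrlSet d 0 x

/-
Both minimizers satisfy the variational inequality of their problem over the convex set `ℝ^d_x`;
testing each against the other minimizer and adding, the gradient terms combine into the strong
monotonicity `2 c_V ‖a - a'‖²` of `∇_a f(x, η, ·)`, while what is left over is the change of
`∇_a f` in `η` at `a'` plus the change of `p`. Cauchy–Schwarz bounds these by
`(c_L ‖η - η'‖ + ‖p - p'‖) ‖a - a'‖`, and dividing by `‖a - a'‖` gives the Lipschitz bound.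
-/

open Matrix

theorem IsMinOn.hasFDerivAt_apply_sub_nonneg {E : Type*} [NormedAddCommGroup E]
    [NormedSpace ℝ E] {s : Set E} {g : E → ℝ} {g' : E →L[ℝ] ℝ} {a b : E}
    (h : IsMinOn g s a) (hs : Convex ℝ s) (hg : HasFDerivAt g g' a) (ha : a ∈ s) (hb : b ∈ s) :
    0 ≤ g' (b - a) :=
  h.localize.hasFDerivWithinAt_nonneg hg.hasFDerivWithinAt
    (sub_mem_posTangentConeAt_of_segment_subset (hs.segment_subset ha hb))

lemma le_of_mul_sq_le_mul {c X B : ℝ} (hc : 0 < c) (hB : 0 ≤ B) (h : c * X ^ 2 ≤ B * X) :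
    c * X ≤ B := by
  by_contra! hlt
  have hX : 0 < X := pos_of_mul_pos_right (hB.trans_lt hlt) hc.le
  nlinarith

section

variable {d : ℕ} {s : Set (Fin d → ℝ)} {x : Fin d}

lemma eucNorm_nonneg (v : Fin d → ℝ) : 0 ≤ eucNorm v := Real.sqrt_nonneg _

lemma eucNorm_sub_comm (u v : Fin d → ℝ) : eucNorm (u - v) = eucNorm (v - u) := by
  unfold eucNorm
  congr 1
  exact Finset.sum_congr rfl fun _ _ => by simp only [Pi.sub_apply]; ring

lemma sum_mul_le_eucNorm_mul_eucNorm (t : Finset (Fin d)) (u v : Fin d → ℝ) :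
    ∑ y ∈ t, u y * v y ≤ eucNorm u * eucNorm v := by
  have hsub : ∀ w : Fin d → ℝ, ∑ y ∈ t, w y ^ 2 ≤ ∑ y, w y ^ 2 := fun w =>
    Finset.sum_le_sum_of_subset_of_nonneg (Finset.subset_univ t) fun _ _ _ => sq_nonneg _
  calc ∑ y ∈ t, u y * v y ≤ √(∑ y ∈ t, u y ^ 2) * √(∑ y ∈ t, v y ^ 2) :=
        Real.sum_mul_le_sqrt_mul_sqrt t u v
    _ ≤ eucNorm u * eucNorm v :=
        mul_le_mul (Real.sqrt_le_sqrt (hsub u)) (Real.sqrt_le_sqrt (hsub v)) (Real.sqrt_nonneg _)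
          (Real.sqrt_nonneg _)

lemma convex_ctrlSet (κ : ℝ) (x : Fin d) : Convex ℝ (ctrlSet d κ x) := by
  rintro a ⟨ha, ha_sum⟩ b ⟨hb, hb_sum⟩ s t hs ht hst
  refine ⟨fun y hy => ?_, ?_⟩
  · simp only [Pi.add_apply, Pi.smul_apply, smul_eq_mul]
    calc κ = s * κ + t * κ := by rw [← add_mul, hst, one_mul]
      _ ≤ s * a y + t * b y := by gcongr <;> [exact ha y hy; exact hb y hy]
  · simp only [Pi.add_apply, Pi.smul_apply, smul_eq_mul, Finset.sum_add_distrib,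
      ← Finset.mul_sum, ha_sum, hb_sum]
    ring

lemma dotProduct_sub_swap (v a b : Fin d → ℝ) : v ⬝ᵥ (a - b) = -(v ⬝ᵥ (b - a)) := by
  rw [← dotProduct_neg, neg_sub]

lemma dotCLM_apply (v w : Fin d → ℝ) : dotCLM v w = v ⬝ᵥ w := by
  simp [dotCLM, dotProduct]

def offSumCLM (x : Fin d) (p : Fin d → ℝ) : (Fin d → ℝ) →L[ℝ] ℝ :=
  ∑ y ∈ Finset.univ.erase x, p y • ContinuousLinearMap.proj y

lemma offSumCLM_apply (x : Fin d) (a p : Fin d → ℝ) : offSumCLM x p a = offSum x a p := by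
  simp [offSumCLM, offSum, mul_comm]

lemma offSum_sub_add_offSum_sub (x : Fin d) (a b p q : Fin d → ℝ) :
    offSum x (b - a) p + offSum x (a - b) q = offSum x (b - a) (p - q) := by
  simp only [offSum, ← Finset.sum_add_distrib, Pi.sub_apply]
  exact Finset.sum_congr rfl fun _ _ => by ring

theorem IsMinOn.dotProduct_add_offSum_nonneg {f : (Fin d → ℝ) → ℝ} {g p a b : Fin d → ℝ}
    (h : IsMinOn (fun b => f b + offSum x b p) s a) (hs : Convex ℝ s)
    (hf : HasFDerivAt f (dotCLM g) a) (ha : a ∈ s) (hb : b ∈ s) :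
    0 ≤ g ⬝ᵥ (b - a) + offSum x (b - a) p := by
  have hG : HasFDerivAt (fun b => f b + offSum x b p) (dotCLM g + offSumCLM x p) a := by
    simpa only [← offSumCLM_apply] using hf.fun_add (offSumCLM x p).hasFDerivAt
  simpa [dotCLM_apply, offSumCLM_apply] using
    h.hasFDerivAt_apply_sub_nonneg hs hG ha hb

theorem two_mul_sq_eucNorm_le_dotProduct_of_strongConvex {f : (Fin d → ℝ) → ℝ}
    {g : (Fin d → ℝ) → Fin d → ℝ} {c : ℝ}
    (hconv : ∀ a ∈ s, ∀ a' ∈ s, f a - f a' ≥ g a' ⬝ᵥ (a - a') + c * eucNorm (a - a') ^ 2)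
    {a b : Fin d → ℝ} (ha : a ∈ s) (hb : b ∈ s) :
    2 * c * eucNorm (a - b) ^ 2 ≤ (g a - g b) ⬝ᵥ (a - b) := by
  have hab := hconv a ha b hb
  have hba := hconv b hb a ha
  rw [eucNorm_sub_comm b a] at hba
  rw [dotProduct_sub_swap _ b a] at hba
  rw [sub_dotProduct]
  linarith

theorem two_mul_sq_eucNorm_sub_le_of_isMinOn (hs : Convex ℝ s) {c : ℝ}
    {f₁ f₂ : (Fin d → ℝ) → ℝ} {g₁ : (Fin d → ℝ) → Fin d → ℝ} {g₂ p₁ p₂ a₁ a₂ : Fin d → ℝ}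
    (hconv : ∀ a ∈ s, ∀ a' ∈ s, f₁ a - f₁ a' ≥ g₁ a' ⬝ᵥ (a - a') + c * eucNorm (a - a') ^ 2)
    (hf₁ : HasFDerivAt f₁ (dotCLM (g₁ a₁)) a₁) (hf₂ : HasFDerivAt f₂ (dotCLM g₂) a₂)
    (ha₁ : a₁ ∈ s) (ha₂ : a₂ ∈ s)
    (hmin₁ : IsMinOn (fun b => f₁ b + offSum x b p₁) s a₁)
    (hmin₂ : IsMinOn (fun b => f₂ b + offSum x b p₂) s a₂) :
    2 * c * eucNorm (a₁ - a₂) ^ 2 ≤ (g₁ a₂ - g₂) ⬝ᵥ (a₂ - a₁) + offSum x (a₂ - a₁) (p₁ - p₂) := by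
  have hopt₁ := hmin₁.dotProduct_add_offSum_nonneg hs hf₁ ha₁ ha₂
  have hopt₂ := hmin₂.dotProduct_add_offSum_nonneg hs hf₂ ha₂ ha₁
  have hmono := two_mul_sq_eucNorm_le_dotProduct_of_strongConvex hconv ha₁ ha₂
  rw [← offSum_sub_add_offSum_sub x a₁ a₂]
  rw [dotProduct_sub_swap _ a₁] at hopt₂ hmono
  simp only [sub_dotProduct] at *
  linarith

end

theorem minimizer_uniformly_lipschitz_general
    (d : ℕ) (cL cV : ℝ) (hcV : 0 < cV)
    (f : Fin d → (Fin d → ℝ) → (Fin d → ℝ) → ℝ)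
    (Daf : Fin d → (Fin d → ℝ) → (Fin d → ℝ) → (Fin d → ℝ))
    -- differentiability with respect to a, with gradient ∇_a f = Daf
    (hdiff : ∀ (x : Fin d) (η a : Fin d → ℝ), HasFDerivAt (f x η) (dotCLM (Daf x η a)) a)
    -- Lipschitz continuity in η of f and of ∇_a f
    (hlip : ∀ (x : Fin d) (a : Fin d → ℝ), ∀ η ∈ probSimplex d, ∀ η' ∈ probSimplex d,
      |f x η a - f x η' a| + eucNorm (Daf x η a - Daf x η' a) ≤ cL * eucNorm (η - η'))
    -- strong convexity
    (hconv : ∀ x : Fin d, ∀ η ∈ probSimplex d, ∀ a ∈ rateSet d x, ∀ a' ∈ rateSet d x,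
      f x η a - f x η a' ≥ (∑ y, Daf x η a' y * (a y - a' y)) + cV * eucNorm (a - a') ^ 2)
    -- a* is the unique minimizer of a ↦ f(x,η,a) + ∑_{y≠x} a_y p_y over ℝ^d_x
    (astar : Fin d → (Fin d → ℝ) → (Fin d → ℝ) → (Fin d → ℝ))
    (hmem : ∀ x : Fin d, ∀ η ∈ probSimplex d, ∀ p : Fin d → ℝ, astar x η p ∈ rateSet d x)
    (hmin : ∀ x : Fin d, ∀ η ∈ probSimplex d, ∀ p : Fin d → ℝ, ∀ a ∈ rateSet d x,
      f x η (astar x η p) + offSum x (astar x η p) p ≤ f x η a + offSum x a p) :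
    ∃ C > (0:ℝ), ∀ x : Fin d, ∀ η ∈ probSimplex d, ∀ η' ∈ probSimplex d,
      ∀ p p' : Fin d → ℝ,
        eucNorm (astar x η p - astar x η' p')
          ≤ C * (eucNorm (η - η') + eucNorm (p - p')) := by
  refine ⟨max cL 1 / (2 * cV), by positivity, fun x η hη η' hη' p p' => ?_⟩
  set a := astar x η p
  set a' := astar x η' p'
  have hminOn : ∀ η ∈ probSimplex d, ∀ p, IsMinOn (fun b => f x η b + offSum x b p)
      (rateSet d x) (astar x η p) := fun η hη p b hb => hmin x η hη p b hb
  have hstab := two_mul_sq_eucNorm_sub_le_of_isMinOn (convex_ctrlSet 0 x) (hconv x η hη)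
    (hdiff x η a) (hdiff x η' a') (hmem x η hη p) (hmem x η' hη' p') (hminOn η hη p)
    (hminOn η' hη' p')
  have hgrad : (Daf x η a' - Daf x η' a') ⬝ᵥ (a' - a)
      ≤ cL * eucNorm (η - η') * eucNorm (a - a') := by
    calc _ ≤ eucNorm (Daf x η a' - Daf x η' a') * eucNorm (a - a') := by
          rw [eucNorm_sub_comm a]; exact sum_mul_le_eucNorm_mul_eucNorm _ _ _
      _ ≤ cL * eucNorm (η - η') * eucNorm (a - a') := by
          have := hlip x a' η hη η' hη'
          gcongr
          · exact eucNorm_nonneg _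
          · linarith [abs_nonneg (f x η a' - f x η' a')]
  have hp : offSum x (a' - a) (p - p') ≤ eucNorm (a - a') * eucNorm (p - p') := by
    rw [eucNorm_sub_comm a]; exact sum_mul_le_eucNorm_mul_eucNorm _ _ _
  have hη := eucNorm_nonneg (η - η')
  have hp' := eucNorm_nonneg (p - p')
  have hX := eucNorm_nonneg (a - a')
  rw [div_mul_eq_mul_div, le_div_iff₀ (by positivity), mul_comm]
  refine le_of_mul_sq_le_mul (by positivity) (by positivity) ?_
  nlinarith [le_max_left cL 1, le_max_right cL 1, mul_nonneg hη hX, mul_nonneg hp' hX]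

/-- the minimizer map `a*` is uniformly Lipschitz in `(η,p)`. -/
theorem minimizer_uniformly_lipschitz
    (d : ℕ) (hd : 2 ≤ d) (cL cV : ℝ) (hcL : 0 < cL) (hcV : 0 < cV)
    (f : Fin d → (Fin d → ℝ) → (Fin d → ℝ) → ℝ)
    (Daf : Fin d → (Fin d → ℝ) → (Fin d → ℝ) → (Fin d → ℝ))
    -- continuity of f
    (hcont : ∀ x : Fin d, Continuous (fun q : (Fin d → ℝ) × (Fin d → ℝ) => f x q.1 q.2))
    -- differentiability with respect to a, with gradient ∇_a f = Daf
    (hdiff : ∀ (x : Fin d) (η a : Fin d → ℝ), HasFDerivAt (f x η) (dotCLM (Daf x η a)) a)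
    -- Lipschitz continuity in η of f and of ∇_a f
    (hlip : ∀ (x : Fin d) (a : Fin d → ℝ), ∀ η ∈ probSimplex d, ∀ η' ∈ probSimplex d,
      |f x η a - f x η' a| + eucNorm (Daf x η a - Daf x η' a) ≤ cL * eucNorm (η - η'))
    -- strong convexity
    (hconv : ∀ x : Fin d, ∀ η ∈ probSimplex d, ∀ a ∈ rateSet d x, ∀ a' ∈ rateSet d x,
      f x η a - f x η a' ≥ (∑ y, Daf x η a' y * (a y - a' y)) + cV * eucNorm (a - a') ^ 2)
    -- superlinearity
    (hsuper : ∀ x : Fin d, ∀ η ∈ probSimplex d, ∀ M : ℝ, ∃ R : ℝ,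
      ∀ a ∈ rateSet d x, R ≤ eucNorm a → M ≤ f x η a / eucNorm a)
    -- a* is the unique minimizer of a ↦ f(x,η,a) + ∑_{y≠x} a_y p_y over ℝ^d_x
    (astar : Fin d → (Fin d → ℝ) → (Fin d → ℝ) → (Fin d → ℝ))
    (hmem : ∀ x : Fin d, ∀ η ∈ probSimplex d, ∀ p : Fin d → ℝ, astar x η p ∈ rateSet d x)
    (hmin : ∀ x : Fin d, ∀ η ∈ probSimplex d, ∀ p : Fin d → ℝ, ∀ a ∈ rateSet d x,
      f x η (astar x η p) + offSum x (astar x η p) p ≤ f x η a + offSum x a p)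
    (huniq : ∀ x : Fin d, ∀ η ∈ probSimplex d, ∀ p : Fin d → ℝ, ∀ a ∈ rateSet d x,
      (∀ b ∈ rateSet d x, f x η a + offSum x a p ≤ f x η b + offSum x b p) →
      a = astar x η p) :
    ∃ C > (0:ℝ), ∀ x : Fin d, ∀ η ∈ probSimplex d, ∀ η' ∈ probSimplex d,
      ∀ p p' : Fin d → ℝ,
        eucNorm (astar x η p - astar x η' p')
          ≤ C * (eucNorm (η - η') + eucNorm (p - p')) :=
  minimizer_uniformly_lipschitz_general d cL cV hcV f Daf hdiff hlip hconv astar hmem hmin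
end
end

section
/- Let Ũ be a classical solution of the master equation. Fix t₀ ∈ [0,T] and μ₀ ∈ P([d]), and let μ̃ : [t₀,T] → P([d]) be the solution of the characteristics ODE d/dt μ̃_y(t) = Σ_x μ̃_x(t) a*_y(x, Δ_x Ũ(t,·,μ̃(t))) with μ̃(t₀) = μ₀. Define ũ(t,x) := Ũ(t,x,μ̃(t)). Then the pair (ũ,μ̃) is a solution of the MFG system (FB) started at (t₀,μ₀); in particular, −∂_t ũ(t,x) = H₁(x, Δ_x ũ(t,·)) + f₂(x, μ̃(t)) and ũ(T,x) = g(x, μ̃(T)). -/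
noncomputable section

/-- The reduced Hamiltonian `H₁(x,p)`, realized at the (assumed) minimizer `a*(x,p)`. -/
def H1fun {d : ℕ} (f₁ : Fin d → (Fin d → ℝ) → ℝ)
    (astar : Fin d → (Fin d → ℝ) → (Fin d → ℝ)) (x : Fin d) (p : Fin d → ℝ) : ℝ :=
  f₁ x (astar x p) + offSum x (astar x p) p

/-- Assumption (A). -/
structure AssumptionA (d : ℕ) (T κ cL cV : ℝ)
    (f₁ f₂ g : Fin d → (Fin d → ℝ) → ℝ)
    (Df₁ Df₂ Dg : Fin d → (Fin d → ℝ) → (Fin d → ℝ))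
    (astar : Fin d → (Fin d → ℝ) → (Fin d → ℝ)) : Prop where
  cL_pos : 0 < cL
  cV_pos : 0 < cV
  grad_f₂ : ∀ x, ∀ η ∈ probSimplex d,
    HasFDerivWithinAt (f₂ x) (dotCLM (Df₂ x η)) (probSimplex d) η
  grad_g : ∀ x, ∀ η ∈ probSimplex d,
    HasFDerivWithinAt (g x) (dotCLM (Dg x η)) (probSimplex d) η
  lip_Df₂ : ∀ x, ∀ η ∈ probSimplex d, ∀ η' ∈ probSimplex d,
    eucNorm (Df₂ x η - Df₂ x η') ≤ cL * eucNorm (η - η')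
  lip_Dg : ∀ x, ∀ η ∈ probSimplex d, ∀ η' ∈ probSimplex d,
    eucNorm (Dg x η - Dg x η') ≤ cL * eucNorm (η - η')
  grad_f₁ : ∀ x, ∀ a ∈ ctrlSet d κ x,
    HasFDerivWithinAt (f₁ x) (dotCLM (Df₁ x a)) (ctrlSet d κ x) a
  strong_convex : ∀ x, ∀ a ∈ ctrlSet d κ x, ∀ a' ∈ ctrlSet d κ x,
    f₁ x a - f₁ x a' ≥ (∑ y, Df₁ x a' y * (a y - a' y)) + cV * eucNorm (a - a') ^ 2
  superlinear : ∀ (x : Fin d) (M : ℝ), ∃ R : ℝ, ∀ a ∈ ctrlSet d κ x,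
    R ≤ eucNorm a → M ≤ f₁ x a / eucNorm a
  mono_g : ∀ η ∈ probSimplex d, ∀ η' ∈ probSimplex d,
    0 ≤ ∑ x, (η x - η' x) * (g x η - g x η')
  mono_f₂ : ∀ η ∈ probSimplex d, ∀ η' ∈ probSimplex d,
    cV * eucNorm (η - η') ^ 2 ≤ ∑ x, (η x - η' x) * (f₂ x η - f₂ x η')
  astar_mem : ∀ x p, astar x p ∈ ctrlSet d κ x
  astar_min : ∀ x p, ∀ a ∈ ctrlSet d κ x,
    f₁ x (astar x p) + offSum x (astar x p) p ≤ f₁ x a + offSum x a p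
  astar_uniq : ∀ x p, ∀ a ∈ ctrlSet d κ x,
    (∀ b ∈ ctrlSet d κ x, f₁ x a + offSum x a p ≤ f₁ x b + offSum x b p) → a = astar x p
  concave : ∀ M > (0:ℝ), ∃ cM > (0:ℝ), ∀ (x : Fin d) (p p' : Fin d → ℝ),
    (∀ y, |p y| ≤ M) → (∀ y, |p' y| ≤ M) →
    H1fun f₁ astar x p - H1fun f₁ astar x p' - ∑ y, astar x p' y * (p y - p' y)
      ≤ -cM * eucNorm (p - p') ^ 2

/-- A solution of the MFG forward-backward system (FB) started at `(t₀, μ₀)`. -/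
def IsFBSol (d : ℕ) (T : ℝ) (f₁ f₂ g : Fin d → (Fin d → ℝ) → ℝ)
    (astar : Fin d → (Fin d → ℝ) → (Fin d → ℝ))
    (t₀ : ℝ) (μ₀ : Fin d → ℝ) (u : ℝ → Fin d → ℝ) (μ : ℝ → Fin d → ℝ) : Prop :=
  (∀ t ∈ Set.Icc t₀ T, μ t ∈ probSimplex d) ∧
  (∀ y, ∀ t ∈ Set.Icc t₀ T,
    HasDerivWithinAt (fun s => μ s y)
      (∑ x, μ t x * astar x (deltaOp x (u t)) y) (Set.Icc t₀ T) t) ∧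
  (∀ x, ∀ t ∈ Set.Icc t₀ T,
    HasDerivWithinAt (fun s => u s x)
      (-(H1fun f₁ astar x (deltaOp x (u t)) + f₂ x (μ t))) (Set.Icc t₀ T) t) ∧
  μ t₀ = μ₀ ∧ (∀ x, u T x = g x (μ T))

/-- A solution of the linearized system (LIN) associated with `(u, μ)`, on `[t₀, T]`
(the initial condition for `m` is stated separately). -/
def IsLINSol (d : ℕ) (T : ℝ)
    (Df₂ Dg : Fin d → (Fin d → ℝ) → (Fin d → ℝ))
    (astar : Fin d → (Fin d → ℝ) → (Fin d → ℝ))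
    (t₀ : ℝ) (u μ : ℝ → Fin d → ℝ) (v m : ℝ → Fin d → ℝ) : Prop :=
  (∀ y, ∀ t ∈ Set.Icc t₀ T,
    HasDerivWithinAt (fun s => m s y)
      (∑ x, m t x * astar x (deltaOp x (u t)) y) (Set.Icc t₀ T) t) ∧
  (∀ x, ∀ t ∈ Set.Icc t₀ T,
    HasDerivWithinAt (fun s => v s x)
      (-((∑ y, v t y * astar x (deltaOp x (u t)) y) + ∑ y, Df₂ x (μ t) y * m t y))
      (Set.Icc t₀ T) t) ∧
  (∀ x, v T x = ∑ y, Dg x (μ T) y * m T y)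

/-- A classical solution of the master equation (ME): `U` differentiable in `t` and
continuously differentiable in `η` (with measure-gradient `DU`), satisfying the equation
and the terminal condition. -/
def IsMESol (d : ℕ) (T : ℝ) (f₁ f₂ g : Fin d → (Fin d → ℝ) → ℝ)
    (astar : Fin d → (Fin d → ℝ) → (Fin d → ℝ))
    (U : ℝ → Fin d → (Fin d → ℝ) → ℝ)
    (DU : ℝ → Fin d → (Fin d → ℝ) → (Fin d → ℝ)) : Prop :=
  (∀ x : Fin d, ∀ t ∈ Set.Icc (0:ℝ) T, ∀ η ∈ probSimplex d,
    HasFDerivWithinAt (fun η' => U t x η') (dotCLM (DU t x η)) (probSimplex d) η) ∧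
  (∀ x : Fin d, ContinuousOn (fun q : ℝ × (Fin d → ℝ) => DU q.1 x q.2)
    (Set.Icc (0:ℝ) T ×ˢ probSimplex d)) ∧
  (∀ x : Fin d, ∀ t ∈ Set.Icc (0:ℝ) T, ∀ η ∈ probSimplex d,
    HasDerivWithinAt (fun s => U s x η)
      (-((∑ y, ∑ z, DU t x η z * (η y * astar y (deltaOp y (fun l => U t l η)) z))
          + H1fun f₁ astar x (deltaOp x (fun l => U t l η)) + f₂ x η))
      (Set.Icc (0:ℝ) T) t) ∧
  (∀ x : Fin d, ∀ η ∈ probSimplex d, U T x η = g x η)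

/-!
Along the characteristic the chain rule gives
`d/dt Ũ(t,x,μ̃(t)) = ∂ₜŨ(t,x,μ̃(t)) + ⟨∇_η Ũ(t,x,μ̃(t)), μ̃'(t)⟩`, and by the characteristics ODE
the second term is exactly the transport term of the master equation, so what remains is the
Hamilton–Jacobi equation of (FB). This chain rule needs only that `∇_η Ũ` is jointly continuous
on `[0,T] × P([d])`: since `P([d])` is convex, the mean value inequality on the segment from
`μ̃(t)` to `μ̃(s)` gives `Ũ(s,x,μ̃(s)) - Ũ(s,x,μ̃(t)) = ⟨∇_η Ũ(t,x,μ̃(t)), μ̃(s) - μ̃(t)⟩ + o(s - t)`.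
-/

open Filter Asymptotics Topology

section

variable {E G : Type*} [NormedAddCommGroup E] [NormedSpace ℝ E] [NormedAddCommGroup G]
  [NormedSpace ℝ G]

theorem isLittleO_apply_sub_apply_sub_fderiv_of_convex {α : Type*} {l : Filter α}
    {F : α → E → G} {F' : α → E → E →L[ℝ] G} {φ : E →L[ℝ] G} {K : Set E} {u : E} {v : α → E}
    (hK : Convex ℝ K) (hu : u ∈ K) (hvK : ∀ᶠ χ in l, v χ ∈ K) (hv : Tendsto v l (𝓝 u))
    (hF' : ∀ᶠ p in l ×ˢ 𝓝[K] u, HasFDerivWithinAt (F p.1) (F' p.1 p.2) K p.2)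
    (hcont : Tendsto (fun p : α × E => F' p.1 p.2) (l ×ˢ 𝓝[K] u) (𝓝 φ)) :
    (fun χ => F χ (v χ) - F χ u - φ (v χ - u)) =o[l] (fun χ => v χ - u) := by
  have seg : ∀ᶠ χ in l, segment ℝ u (v χ) ⊆ K := hvK.mono fun χ h => hK.segment_subset hu h
  refine isLittleO_iff.2 fun ε hε => ?_
  have hderiv : ∀ᶠ χ in l, ∀ z ∈ segment ℝ u (v χ), HasFDerivWithinAt (F χ) (F' χ z) K z :=
    hF'.segment_of_prod_nhdsWithin tendsto_const_nhds hv seg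
  have hclose : ∀ᶠ χ in l, ∀ z ∈ segment ℝ u (v χ), ‖F' χ z - φ‖ ≤ ε := by
    refine Eventually.segment_of_prod_nhdsWithin tendsto_const_nhds hv ?_ seg
    simpa only [Metric.mem_closedBall, dist_eq_norm] using
      hcont.eventually (Metric.closedBall_mem_nhds φ hε)
  filter_upwards [seg, hderiv, hclose] with χ hseg hderiv hclose
  exact (convex_segment u (v χ)).norm_image_sub_le_of_norm_hasFDerivWithin_le'
    (fun z hz => (hderiv z hz).mono hseg) hclose (left_mem_segment ..) (right_mem_segment ..)

theorem hasDerivWithinAt_comp_curve_of_continuousWithinAt_fderiv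
    {F : ℝ → E → G} {F' : ℝ → E → E →L[ℝ] G} {S : Set ℝ} {K : Set E}
    {μ : ℝ → E} {t : ℝ} {V : E} {A : G}
    (hK : Convex ℝ K) (hμK : Set.MapsTo μ S K) (ht : t ∈ S)
    (hF' : ∀ s ∈ S, ∀ η ∈ K, HasFDerivWithinAt (F s) (F' s η) K η)
    (hcont : ContinuousWithinAt (fun p : ℝ × E => F' p.1 p.2) (S ×ˢ K) (t, μ t))
    (hμ : HasDerivWithinAt μ V S t) (hFt : HasDerivWithinAt (fun s => F s (μ t)) A S t) :
    HasDerivWithinAt (fun s => F s (μ s)) (A + F' t (μ t) V) S t := by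
  set φ := F' t (μ t)
  have hincr : (fun s => F s (μ s) - F s (μ t) - φ (μ s - μ t)) =o[𝓝[S] t] (μ · - μ t) := by
    refine isLittleO_apply_sub_apply_sub_fderiv_of_convex (F' := F') hK (hμK ht)
      (eventually_mem_nhdsWithin.mono fun s hs => hμK hs) hμ.continuousWithinAt ?_ ?_
    · filter_upwards [prod_mem_prod self_mem_nhdsWithin self_mem_nhdsWithin] with p hp
      exact hF' p.1 hp.1 p.2 hp.2
    · rw [← nhdsWithin_prod_eq]
      exact hcont
  have hlin : HasDerivWithinAt (fun s => φ (μ s)) (φ V) S t :=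
    φ.hasFDerivAt.comp_hasDerivWithinAt t hμ
  rw [hasDerivWithinAt_iff_isLittleO] at hFt hlin ⊢
  refine ((hFt.add (hincr.trans_isBigO hμ.hasFDerivWithinAt.isBigO_sub)).add hlin).congr_left
    fun s => ?_
  simp only [map_sub, smul_add]
  abel

end

lemma convex_probSimplex (d : ℕ) : Convex ℝ (probSimplex d) := convex_stdSimplex ℝ (Fin d)

lemma dotCLM_apply_s16 {d : ℕ} (v h : Fin d → ℝ) : dotCLM v h = ∑ y, v y * h y := by
  simp [dotCLM]

lemma continuous_dotCLM (d : ℕ) : Continuous (dotCLM (d := d)) :=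
  continuous_finsetSum _ fun y _ => (continuous_apply y).smul continuous_const

theorem master_equation_characteristics_general
    (d : ℕ) (T : ℝ)
    (f₁ f₂ g : Fin d → (Fin d → ℝ) → ℝ)
    (astar : Fin d → (Fin d → ℝ) → (Fin d → ℝ))
    -- Ũ is a classical solution of the master equation
    (Ut : ℝ → Fin d → (Fin d → ℝ) → ℝ)
    (DUt : ℝ → Fin d → (Fin d → ℝ) → (Fin d → ℝ))
    (hME : IsMESol d T f₁ f₂ g astar Ut DUt)
    -- μ̃ solves the characteristics ODE started at (t₀,μ₀)
    (t₀ : ℝ) (ht₀ : t₀ ∈ Set.Icc (0:ℝ) T)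
    (μ₀ : Fin d → ℝ)
    (μt : ℝ → Fin d → ℝ)
    (hsimplex : ∀ t ∈ Set.Icc t₀ T, μt t ∈ probSimplex d)
    (hODE : ∀ y, ∀ t ∈ Set.Icc t₀ T,
      HasDerivWithinAt (fun s => μt s y)
        (∑ x, μt t x * astar x (deltaOp x (fun l => Ut t l (μt t))) y) (Set.Icc t₀ T) t)
    (hinit : μt t₀ = μ₀) :
    IsFBSol d T f₁ f₂ g astar t₀ μ₀ (fun t x => Ut t x (μt t)) μt := by
  obtain ⟨hgrad, hcontDU, htime, hterm⟩ := hME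
  have hsub : Set.Icc t₀ T ⊆ Set.Icc 0 T := Set.Icc_subset_Icc_left ht₀.1
  refine ⟨hsimplex, hODE, fun x t ht => ?_, hinit, fun x => hterm x _ (hsimplex T ⟨ht₀.2, le_rfl⟩)⟩
  have hμ := hasDerivWithinAt_pi.2 fun z => hODE z t ht
  have hcont : ContinuousWithinAt (fun q : ℝ × (Fin d → ℝ) => dotCLM (DUt q.1 x q.2))
      (Set.Icc t₀ T ×ˢ probSimplex d) (t, μt t) :=
    ((continuous_dotCLM d).comp_continuousOn (hcontDU x)).mono
      (Set.prod_mono hsub subset_rfl) _ ⟨ht, hsimplex t ht⟩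
  have hchain := hasDerivWithinAt_comp_curve_of_continuousWithinAt_fderiv (convex_probSimplex d)
    (fun s hs => hsimplex s hs) ht (fun s hs η hη => hgrad x s (hsub hs) η hη) hcont hμ
    ((htime x t (hsub ht) _ (hsimplex t ht)).mono hsub)
  refine hchain.congr_deriv ?_
  simp only [dotCLM_apply_s16, Finset.mul_sum]
  rw [Finset.sum_comm]
  ring

/-- given a classical solution `Ũ` of the master equation and the solution
`μ̃` of the characteristics ODE started at `(t₀,μ₀)`, the pair `(ũ,μ̃)` with
`ũ(t,x) := Ũ(t,x,μ̃(t))` solves the MFG system (FB) started at `(t₀,μ₀)`. -/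
theorem master_equation_characteristics
    (d : ℕ) (hd : 2 ≤ d) (T κ : ℝ) (hT : 0 < T) (hκ : 0 < κ)
    (f₁ f₂ g : Fin d → (Fin d → ℝ) → ℝ)
    (Df₂ Dg : Fin d → (Fin d → ℝ) → (Fin d → ℝ))
    (astar : Fin d → (Fin d → ℝ) → (Fin d → ℝ))
    -- differentiability of f₂ and g on the simplex
    (hDf₂ : ∀ x, ∀ η ∈ probSimplex d,
      HasFDerivWithinAt (f₂ x) (dotCLM (Df₂ x η)) (probSimplex d) η)
    (hDg : ∀ x, ∀ η ∈ probSimplex d,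
      HasFDerivWithinAt (g x) (dotCLM (Dg x η)) (probSimplex d) η)
    -- H₁ is attained at the unique point a*(x,p), and a* is continuous
    (hmem : ∀ x p, astar x p ∈ ctrlSet d κ x)
    (hmin : ∀ x p, ∀ a ∈ ctrlSet d κ x,
      f₁ x (astar x p) + offSum x (astar x p) p ≤ f₁ x a + offSum x a p)
    (huniq : ∀ x p, ∀ a ∈ ctrlSet d κ x,
      (∀ b ∈ ctrlSet d κ x, f₁ x a + offSum x a p ≤ f₁ x b + offSum x b p) → a = astar x p)
    (hacont : ∀ x, Continuous (astar x))
    -- Ũ is a classical solution of the master equation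
    (Ut : ℝ → Fin d → (Fin d → ℝ) → ℝ)
    (DUt : ℝ → Fin d → (Fin d → ℝ) → (Fin d → ℝ))
    (hME : IsMESol d T f₁ f₂ g astar Ut DUt)
    -- μ̃ solves the characteristics ODE started at (t₀,μ₀)
    (t₀ : ℝ) (ht₀ : t₀ ∈ Set.Icc (0:ℝ) T)
    (μ₀ : Fin d → ℝ) (hμ₀ : μ₀ ∈ probSimplex d)
    (μt : ℝ → Fin d → ℝ)
    (hsimplex : ∀ t ∈ Set.Icc t₀ T, μt t ∈ probSimplex d)
    (hODE : ∀ y, ∀ t ∈ Set.Icc t₀ T,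
      HasDerivWithinAt (fun s => μt s y)
        (∑ x, μt t x * astar x (deltaOp x (fun l => Ut t l (μt t))) y) (Set.Icc t₀ T) t)
    (hinit : μt t₀ = μ₀) :
    IsFBSol d T f₁ f₂ g astar t₀ μ₀ (fun t x => Ut t x (μt t)) μt :=
  master_equation_characteristics_general d T f₁ f₂ g astar Ut DUt hME t₀ ht₀ μ₀ μt hsimplex hODE
    hinit
end
end
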